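/- arXiv:2104.07980 — 6 statements merged into one kernel-verified Lean document; each statement's English description precedes it below -/
import Mathlib

section
/- Let b be a positive integer, M a positive integer, Ω > 0, and let Φ_1, …, Φ_M be i.i.d. real random variables uniformly distributed on [−π/2^b, π/2^b). Then E[|Σ_{m=1}^{M} √Ω · e^{iΦ_m}|²] = M·Ω·(1 + (M−1)·Q), where Q = ((2^b/π)·sin(π/2^b))². -/
/-!
Expanding `‖∑ m, exp (i Φ m)‖² = ∑ m, ∑ n, cos (Φ m - Φ n)`, each of the `M` diagonal terms is `1`,
while by independence each off-diagonal term has expectation `(E cos Φ)² + (E sin Φ)²`. For the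
uniform law on `[-a, a)` these moments are `sin a / a` and `0`, and with `a = π / 2 ^ b` the first is
`(2 ^ b / π) * sin (π / 2 ^ b)`.
-/

open MeasureTheory ProbabilityTheory Real

lemma sq_norm_sum_exp_I_mul {ι : Type*} (s : Finset ι) (φ : ι → ℝ) :
    ‖∑ i ∈ s, Complex.exp (Complex.I * φ i)‖ ^ 2 = ∑ i ∈ s, ∑ j ∈ s, cos (φ i - φ j) := by
  have hre (x : ℝ) : (Complex.exp (Complex.I * x)).re = cos x := by
    rw [mul_comm, Complex.exp_ofReal_mul_I_re]
  have him (x : ℝ) : (Complex.exp (Complex.I * x)).im = sin x := by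
    rw [mul_comm, Complex.exp_ofReal_mul_I_im]
  rw [Complex.sq_norm, Complex.normSq_apply, Complex.re_sum, Complex.im_sum]
  simp only [hre, him, Finset.sum_mul_sum, ← Finset.sum_add_distrib, cos_sub]

lemma Fintype.sum_sum_eq_of_diag_of_offDiag {ι : Type*} [Fintype ι] (f : ι → ι → ℝ) {d q : ℝ}
    (hd : ∀ i, f i i = d) (hq : Pairwise fun i j => f i j = q) :
    ∑ i, ∑ j, f i j = Fintype.card ι * (d + (Fintype.card ι - 1) * q) := by
  have hrow (i : ι) : ∑ j, f i j = d + (Fintype.card ι - 1) * q := by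
    classical
    rw [← Finset.add_sum_erase _ _ (Finset.mem_univ i), hd,
      Finset.sum_congr rfl fun j hj => hq (Finset.ne_of_mem_erase hj).symm, Finset.sum_const,
      Finset.card_erase_of_mem (Finset.mem_univ i), nsmul_eq_mul, Finset.card_univ,
      Nat.cast_pred (Fintype.card_pos_iff.mpr ⟨i⟩)]
  simp only [hrow, Finset.sum_const, Finset.card_univ, nsmul_eq_mul]

section Probability

variable {Ω : Type*} [MeasurableSpace Ω] {μ : Measure Ω}

lemma integral_comp_eq_mul_intervalIntegral_of_map_eq {X : Ω → ℝ} (hX : AEMeasurable X μ)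
    {c u v : ℝ} (hc : 0 ≤ c) (huv : u ≤ v)
    (hmap : μ.map X = ENNReal.ofReal c • volume.restrict (Set.Ico u v))
    {f : ℝ → ℝ} (hf : Continuous f) :
    ∫ ω, f (X ω) ∂μ = c * ∫ x in u..v, f x := by
  rw [← integral_map hX hf.aestronglyMeasurable, hmap, integral_smul_measure,
    ENNReal.toReal_ofReal hc, smul_eq_mul, integral_Ico_eq_integral_Ioo,
    intervalIntegral.integral_of_le huv, integral_Ioc_eq_integral_Ioo]

variable [IsProbabilityMeasure μ]

lemma integrable_cos_comp {X : Ω → ℝ} (hX : AEMeasurable X μ) : Integrable (fun ω => cos (X ω)) μ :=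
  .of_bound (continuous_cos.measurable.comp_aemeasurable hX).aestronglyMeasurable 1
    (.of_forall fun ω => by simpa using abs_cos_le_one (X ω))

lemma ProbabilityTheory.IndepFun.integral_cos_sub {X Y : Ω → ℝ} (hXY : IndepFun X Y μ)
    (hX : AEMeasurable X μ) (hY : AEMeasurable Y μ) :
    ∫ ω, cos (X ω - Y ω) ∂μ =
      (∫ ω, cos (X ω) ∂μ) * (∫ ω, cos (Y ω) ∂μ) + (∫ ω, sin (X ω) ∂μ) * (∫ ω, sin (Y ω) ∂μ) := by
  have hprod {f g : ℝ → ℝ} (hf : Continuous f) (hg : Continuous g) (hfb : ∀ x, |f x| ≤ 1)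
      (hgb : ∀ x, |g x| ≤ 1) : Integrable (fun ω => f (X ω) * g (Y ω)) μ :=
    .of_bound ((hf.measurable.comp_aemeasurable hX).mul
        (hg.measurable.comp_aemeasurable hY)).aestronglyMeasurable 1
      (.of_forall fun ω => by
        rw [norm_mul, Real.norm_eq_abs, Real.norm_eq_abs]
        exact mul_le_one₀ (hfb _) (abs_nonneg _) (hgb _))
  simp only [cos_sub]
  rw [integral_add (hprod continuous_cos continuous_cos abs_cos_le_one abs_cos_le_one)
      (hprod continuous_sin continuous_sin abs_sin_le_one abs_sin_le_one),
    hXY.integral_fun_comp_mul_comp hX hY continuous_cos.aestronglyMeasurable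
      continuous_cos.aestronglyMeasurable,
    hXY.integral_fun_comp_mul_comp hX hY continuous_sin.aestronglyMeasurable
      continuous_sin.aestronglyMeasurable]

theorem integral_sq_norm_sum_exp_I_mul {ι : Type*} [Fintype ι] {X : ι → Ω → ℝ}
    (hX : ∀ i, AEMeasurable (X i) μ) (hindep : Pairwise fun i j => IndepFun (X i) (X j) μ)
    {c s : ℝ} (hc : ∀ i, ∫ ω, cos (X i ω) ∂μ = c) (hs : ∀ i, ∫ ω, sin (X i ω) ∂μ = s) :
    ∫ ω, ‖∑ i, Complex.exp (Complex.I * X i ω)‖ ^ 2 ∂μ =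
      Fintype.card ι * (1 + (Fintype.card ι - 1) * (c ^ 2 + s ^ 2)) := by
  have hint (i j : ι) : Integrable (fun ω => cos (X i ω - X j ω)) μ :=
    integrable_cos_comp ((hX i).sub (hX j))
  simp only [sq_norm_sum_exp_I_mul]
  rw [integral_finsetSum _ fun i _ => integrable_finsetSum _ fun j _ => hint i j]
  simp only [integral_finsetSum _ fun j _ => hint _ j]
  refine Fintype.sum_sum_eq_of_diag_of_offDiag _ (fun i => by simp) fun i j hij => ?_
  dsimp only
  rw [(hindep hij).integral_cos_sub (hX i) (hX j), hc, hc, hs, hs]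
  ring

end Probability

theorem beamforming_gain_los_general
    {Ωs : Type*} [MeasurableSpace Ωs] (μ : Measure Ωs) [IsProbabilityMeasure μ]
    (b : ℕ) (M : ℕ) (Ω : ℝ) (hΩ : 0 < Ω)
    (Φ : Fin M → Ωs → ℝ) (hmeas : ∀ m, Measurable (Φ m))
    (hindep : iIndepFun Φ μ)
    (hunif : ∀ m, Measure.map (Φ m) μ =
      ENNReal.ofReal ((2 : ℝ) ^ b / (2 * π)) •
        volume.restrict (Set.Ico (-(π / 2 ^ b)) (π / 2 ^ b))) :
    (∫ ω, ‖∑ m, (Real.sqrt Ω : ℂ) * Complex.exp (Complex.I * (Φ m ω : ℂ))‖ ^ 2 ∂μ) =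
      (M : ℝ) * Ω * (1 + ((M : ℝ) - 1) * ((2 : ℝ) ^ b / π * Real.sin (π / 2 ^ b)) ^ 2) := by
  have hmean {f : ℝ → ℝ} (hf : Continuous f) (m : Fin M) :
      ∫ ω, f (Φ m ω) ∂μ = (2 : ℝ) ^ b / (2 * π) * ∫ x in -(π / 2 ^ b)..π / 2 ^ b, f x :=
    integral_comp_eq_mul_intervalIntegral_of_map_eq (hmeas m).aemeasurable (by positivity)
      (neg_le_self (by positivity)) (hunif m) hf
  have hcos (m : Fin M) : ∫ ω, cos (Φ m ω) ∂μ = (2 : ℝ) ^ b / π * sin (π / 2 ^ b) := by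
    rw [hmean continuous_cos, integral_cos, sin_neg]
    field_simp
    ring
  have hsin (m : Fin M) : ∫ ω, sin (Φ m ω) ∂μ = 0 := by
    rw [hmean continuous_sin, integral_sin, cos_neg, sub_self, mul_zero]
  have hfactor (ω : Ωs) : ‖∑ m, (Real.sqrt Ω : ℂ) * Complex.exp (Complex.I * (Φ m ω : ℂ))‖ ^ 2 =
      Ω * ‖∑ m, Complex.exp (Complex.I * (Φ m ω : ℂ))‖ ^ 2 := by
    rw [← Finset.mul_sum, norm_mul, mul_pow, Complex.norm_real, Real.norm_eq_abs,
      abs_of_nonneg (sqrt_nonneg Ω), sq_sqrt hΩ.le]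
  simp only [hfactor]
  rw [integral_const_mul, integral_sq_norm_sum_exp_I_mul (fun m => (hmeas m).aemeasurable)
    (fun m n hmn => hindep.indepFun hmn) hcos hsin, Fintype.card_fin]
  ring

/-- Beamforming-gain identity: for i.i.d. quantization errors `Φ m` uniform on
`[-π/2^b, π/2^b)`, `E[|Σ_{m=1}^M √Ω·e^{iΦ_m}|²] = M·Ω·(1 + (M-1)·Q)` where
`Q = ((2^b/π)·sin(π/2^b))²`. -/
theorem beamforming_gain_los
    {Ωs : Type*} [MeasurableSpace Ωs] (μ : Measure Ωs) [IsProbabilityMeasure μ]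
    (b : ℕ) (hb : 0 < b) (M : ℕ) (hM : 0 < M) (Ω : ℝ) (hΩ : 0 < Ω)
    (Φ : Fin M → Ωs → ℝ) (hmeas : ∀ m, Measurable (Φ m))
    (hindep : iIndepFun Φ μ)
    (hunif : ∀ m, Measure.map (Φ m) μ =
      ENNReal.ofReal ((2 : ℝ) ^ b / (2 * π)) •
        volume.restrict (Set.Ico (-(π / 2 ^ b)) (π / 2 ^ b))) :
    (∫ ω, ‖∑ m, (Real.sqrt Ω : ℂ) * Complex.exp (Complex.I * (Φ m ω : ℂ))‖ ^ 2 ∂μ) =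
      (M : ℝ) * Ω * (1 + ((M : ℝ) - 1) * ((2 : ℝ) ^ b / π * Real.sin (π / 2 ^ b)) ^ 2) :=
  beamforming_gain_los_general μ b M Ω hΩ Φ hmeas hindep hunif
end

section
/- Let b, M, N be positive integers, P_S, P_R, Ω_S, N_0, η > 0, and let the following mutually independent random objects be given: (i) i.i.d. quantization errors Φ_1, …, Φ_M uniform on [−π/2^b, π/2^b), so that the combined source signal at the relay's RF-chain is u^T h_S = Σ_{m=1}^{M} √Ω_S · e^{iΦ_m}; (ii) pairwise independent noises w_1, …, w_M with E[w_m] = 0 and E[|w_m|²] = N_0, combined as u^T w_R with |u_m| = 1; (iii) an M × N self-interference matrix G with pairwise independent entries of mean 0 and variance η/M, combined as u^T G v with |u_m| = |v_n| = 1. Then the SINR at the relay, γ_SR := P_S·E[|u^T h_S|²] / (E[|u^T w_R|²] + (P_R/N)·E[|u^T G v|²]), equals P_S·Ω_S·(1 + (M−1)·Q) / (N_0 + (η/M)·P_R), where Q = ((2^b/π)·sin(π/2^b))². -/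
/-!
Expanding `‖∑ i, X i‖² = ∑ i, ∑ j, X i * conj (X j)` and factorising the off-diagonal
expectations by pairwise independence, a pairwise independent family with common mean `c` and
common second moment `σ` has `E‖∑ X i‖² = n σ + n (n - 1) ‖c‖²`. The signal terms
`√Ω_S e^{iΦ_m}` have second moment `Ω_S` and mean `√Ω_S · sin a / a` with `a = π / 2^b` (the
characteristic function of the uniform law at `1`), which produces the coherent gain
`M Ω_S (1 + (M - 1) Q)`; the noise and self-interference terms are centred, so only the diagonal
survives, giving `M N_0` and `M N · η / M`. The common factor `M` then cancels.
-/

open MeasureTheory ProbabilityTheory Real Finset ComplexConjugate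

theorem Finset.sum_sum_ite_eq_card {ι R : Type*} [Fintype ι] [DecidableEq ι] [CommRing R]
    (a b : R) :
    ∑ i : ι, ∑ j : ι, (if i = j then a else b) =
      Fintype.card ι * a + Fintype.card ι * (Fintype.card ι - 1) * b := by
  have hsplit : ∀ i j : ι, (if i = j then a else b) = (if i = j then a - b else 0) + b :=
    fun i j => by split_ifs <;> ring
  simp only [hsplit, sum_add_distrib, sum_ite_eq, mem_univ, if_true, sum_const, card_univ,
    nsmul_eq_mul]
  ring

section SecondMoment

variable {Ω ι 𝕜 : Type*} [MeasurableSpace Ω] {μ : Measure Ω} [Fintype ι] [RCLike 𝕜]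

theorem ofReal_integral_norm_sum_sq {X : ι → Ω → 𝕜} (hX : ∀ i, MemLp (X i) 2 μ) :
    ((∫ ω, ‖∑ i, X i ω‖ ^ 2 ∂μ : ℝ) : 𝕜) = ∑ i, ∑ j, ∫ ω, X i ω * conj (X j ω) ∂μ := by
  have hint : ∀ i j, Integrable (fun ω => X i ω * conj (X j ω)) μ :=
    fun i j => (hX i).integrable_mul (hX j).star
  have hexpand : ∀ ω, ((‖∑ i, X i ω‖ ^ 2 : ℝ) : 𝕜) = ∑ i, ∑ j, X i ω * conj (X j ω) := by
    intro ω
    rw [RCLike.ofReal_pow, ← RCLike.mul_conj, map_sum, sum_mul_sum]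
  rw [← integral_ofReal]
  simp only [hexpand]
  rw [integral_finsetSum _ fun i _ => integrable_finsetSum _ fun j _ => hint i j]
  exact sum_congr rfl fun i _ => integral_finsetSum _ fun j _ => hint i j

theorem integral_norm_sum_sq_of_pairwise_indepFun {X : ι → Ω → 𝕜}
    (hX : ∀ i, MemLp (X i) 2 μ) (hindep : Pairwise fun i j => IndepFun (X i) (X j) μ)
    {c : 𝕜} {σ : ℝ} (hmean : ∀ i, ∫ ω, X i ω ∂μ = c) (hsecond : ∀ i, ∫ ω, ‖X i ω‖ ^ 2 ∂μ = σ) :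
    ∫ ω, ‖∑ i, X i ω‖ ^ 2 ∂μ =
      Fintype.card ι * σ + Fintype.card ι * (Fintype.card ι - 1) * ‖c‖ ^ 2 := by
  classical
  have hcross : ∀ i j, ∫ ω, X i ω * conj (X j ω) ∂μ =
      ((if i = j then σ else ‖c‖ ^ 2 : ℝ) : 𝕜) := by
    intro i j
    split_ifs with hij
    · subst hij
      simp only [RCLike.mul_conj, ← RCLike.ofReal_pow, integral_ofReal, hsecond]
    · have hij' : IndepFun (X i) (fun ω => conj (X j ω)) μ :=
        (hindep hij).comp measurable_id continuous_star.measurable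
      rw [hij'.integral_fun_mul_eq_mul_integral (hX i).1 (hX j).1.star]
      simp only [integral_conj, hmean, RCLike.mul_conj, RCLike.ofReal_pow]
  apply RCLike.ofReal_injective (K := 𝕜)
  rw [ofReal_integral_norm_sum_sq hX]
  simp only [hcross, ← RCLike.ofReal_sum, Finset.sum_sum_ite_eq_card]

theorem integral_norm_sum_mul_sq_of_pairwise_indepFun {a : ι → 𝕜} (ha : ∀ i, ‖a i‖ = 1)
    {Y : ι → Ω → 𝕜} (hY : ∀ i, MemLp (Y i) 2 μ)
    (hindep : Pairwise fun i j => IndepFun (Y i) (Y j) μ) (hmean : ∀ i, ∫ ω, Y i ω ∂μ = 0)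
    {σ : ℝ} (hsecond : ∀ i, ∫ ω, ‖Y i ω‖ ^ 2 ∂μ = σ) :
    ∫ ω, ‖∑ i, a i * Y i ω‖ ^ 2 ∂μ = Fintype.card ι * σ := by
  have h := integral_norm_sum_sq_of_pairwise_indepFun (X := fun i ω => a i * Y i ω) (c := 0)
    (σ := σ) (fun i => (hY i).const_mul (a i))
    (fun i j hij => (hindep hij).comp (measurable_const_mul (a i)) (measurable_const_mul (a j)))
    (fun i => by rw [integral_const_mul, hmean, mul_zero])
    (fun i => by simp only [norm_mul, ha, one_mul, hsecond])
  simpa using h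

end SecondMoment

section UniformPhase

variable {Ω ι : Type*} [MeasurableSpace Ω] {μ : Measure Ω}

theorem integral_cexp_I_mul_of_map_eq_uniform {a : ℝ} (ha : 0 < a) {f : Ω → ℝ}
    (hf : AEMeasurable f μ)
    (hunif : μ.map f = ENNReal.ofReal (2 * a)⁻¹ • volume.restrict (Set.Ico (-a) a)) :
    ∫ ω, Complex.exp (Complex.I * f ω) ∂μ = (sin a / a : ℝ) := by
  have hcont : Continuous fun x : ℝ => Complex.exp (Complex.I * x) := by fun_prop
  rw [← integral_map hf hcont.aestronglyMeasurable, hunif, integral_smul_measure,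
    integral_Ico_eq_integral_Ioo, ← integral_Ioc_eq_integral_Ioo,
    ← intervalIntegral.integral_of_le (by linarith), integral_exp_mul_complex Complex.I_ne_zero,
    ENNReal.toReal_ofReal (by positivity)]
  rw [Complex.real_smul, mul_comm Complex.I, mul_comm Complex.I, Complex.exp_mul_I,
    Complex.exp_mul_I, Complex.ofReal_neg, Complex.cos_neg, Complex.sin_neg]
  push_cast
  field_simp
  ring

theorem integral_norm_sum_mul_cexp_sq [IsProbabilityMeasure μ] [Fintype ι] {a : ℝ} (ha : 0 < a)
    (r : ℝ) {Φ : ι → Ω → ℝ} (hΦ : ∀ i, AEMeasurable (Φ i) μ)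
    (hindep : Pairwise fun i j => IndepFun (Φ i) (Φ j) μ)
    (hunif : ∀ i, μ.map (Φ i) = ENNReal.ofReal (2 * a)⁻¹ • volume.restrict (Set.Ico (-a) a)) :
    ∫ ω, ‖∑ i, (r : ℂ) * Complex.exp (Complex.I * Φ i ω)‖ ^ 2 ∂μ =
      Fintype.card ι * r ^ 2 * (1 + (Fintype.card ι - 1) * (sin a / a) ^ 2) := by
  have hcont : Continuous fun x : ℝ => (r : ℂ) * Complex.exp (Complex.I * x) := by fun_prop
  have hnorm : ∀ x : ℝ, ‖(r : ℂ) * Complex.exp (Complex.I * x)‖ = |r| := by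
    simp [Complex.norm_exp_I_mul_ofReal]
  rw [integral_norm_sum_sq_of_pairwise_indepFun
    (X := fun i ω => (r : ℂ) * Complex.exp (Complex.I * Φ i ω))
    (c := ((r * (sin a / a) : ℝ) : ℂ)) (σ := r ^ 2)
    (fun i => MemLp.of_bound (hcont.measurable.comp_aemeasurable (hΦ i)).aestronglyMeasurable |r|
      (ae_of_all _ fun ω => (hnorm _).le))
    (fun i j hij => (hindep hij).comp hcont.measurable hcont.measurable)
    (fun i => by rw [integral_const_mul, integral_cexp_I_mul_of_map_eq_uniform ha (hΦ i) (hunif i),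
      Complex.ofReal_mul])
    (fun i => by simp only [hnorm, sq_abs, integral_const, probReal_univ, one_smul])]
  rw [Complex.norm_real, Real.norm_eq_abs, sq_abs]
  ring

end UniformPhase

theorem relay_side_SINR_los_general
    {Ωs : Type*} [MeasurableSpace Ωs] (μ : Measure Ωs) [IsProbabilityMeasure μ]
    (b M N : ℕ) (hM : 0 < M) (hN : 0 < N)
    (P_S P_R Ω_S N_0 η : ℝ)
    (hΩS : 0 < Ω_S)
    -- (i) quantization errors: i.i.d. uniform on [-π/2^b, π/2^b)
    (Φ : Fin M → Ωs → ℝ) (hΦmeas : ∀ m, Measurable (Φ m))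
    (hΦindep : iIndepFun Φ μ)
    (hΦunif : ∀ m, Measure.map (Φ m) μ =
      ENNReal.ofReal ((2 : ℝ) ^ b / (2 * π)) •
        volume.restrict (Set.Ico (-(π / 2 ^ b)) (π / 2 ^ b)))
    -- (ii) noises: pairwise independent, zero mean, power N_0
    (w : Fin M → Ωs → ℂ) (hwmem : ∀ m, MemLp (w m) 2 μ)
    (hwindep : ∀ m m', m ≠ m' → IndepFun (w m) (w m') μ)
    (hwmean : ∀ m, ∫ ω, w m ω ∂μ = 0)
    (hwvar : ∀ m, ∫ ω, ‖w m ω‖ ^ 2 ∂μ = N_0)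
    -- unit-modulus phase-shift vectors
    (u : Fin M → ℂ) (v : Fin N → ℂ)
    (hu : ∀ m, ‖u m‖ = 1) (hv : ∀ n, ‖v n‖ = 1)
    -- (iii) self-interference matrix: pairwise independent, zero mean, variance η/M
    (G : Fin M → Fin N → Ωs → ℂ) (hGmem : ∀ m n, MemLp (G m n) 2 μ)
    (hGindep : ∀ m n m' n', (m, n) ≠ (m', n') → IndepFun (G m n) (G m' n') μ)
    (hGmean : ∀ m n, ∫ ω, G m n ω ∂μ = 0)
    (hGvar : ∀ m n, ∫ ω, ‖G m n ω‖ ^ 2 ∂μ = η / M) :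
    P_S * (∫ ω, ‖∑ m, (Real.sqrt Ω_S : ℂ) * Complex.exp (Complex.I * (Φ m ω : ℂ))‖ ^ 2 ∂μ) /
      ((∫ ω, ‖∑ m, u m * w m ω‖ ^ 2 ∂μ) +
        (P_R / N) * (∫ ω, ‖∑ m, ∑ n, u m * G m n ω * v n‖ ^ 2 ∂μ)) =
    P_S * Ω_S * (1 + ((M : ℝ) - 1) * ((2 : ℝ) ^ b / π * Real.sin (π / 2 ^ b)) ^ 2) /
      (N_0 + (η / M) * P_R) := by
  have hunif : ∀ m, μ.map (Φ m) = ENNReal.ofReal (2 * (π / 2 ^ b))⁻¹ •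
      volume.restrict (Set.Ico (-(π / 2 ^ b)) (π / 2 ^ b)) := by
    intro m
    rw [hΦunif m]
    congr 3
    field_simp
  have hsignal := integral_norm_sum_mul_cexp_sq (by positivity) √Ω_S
    (fun m => (hΦmeas m).aemeasurable) (fun _ _ => hΦindep.indepFun) hunif
  have hnoise := integral_norm_sum_mul_sq_of_pairwise_indepFun hu hwmem
    (fun m m' => hwindep m m') hwmean hwvar
  have hSI : ∫ ω, ‖∑ m, ∑ n, u m * G m n ω * v n‖ ^ 2 ∂μ = M * N * (η / M) := by
    simp_rw [← Fintype.sum_prod_type', mul_right_comm (u _)]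
    rw [integral_norm_sum_mul_sq_of_pairwise_indepFun (fun p => by simp [hu, hv])
      (fun p => hGmem p.1 p.2) (fun (p q : Fin M × Fin N) => hGindep p.1 p.2 q.1 q.2)
      (fun p => hGmean p.1 p.2) (fun p => hGvar p.1 p.2)]
    simp
  have hsinc : sin (π / 2 ^ b) / (π / 2 ^ b) = 2 ^ b / π * sin (π / 2 ^ b) := by
    field_simp
  have hden : M * N_0 + P_R / N * (M * N * (η / M)) = M * (N_0 + η / M * P_R) := by
    field_simp
  rw [hsignal, hnoise, hSI, Real.sq_sqrt hΩS.le, Fintype.card_fin, hden, hsinc,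
    ← mul_div_mul_left (P_S * Ω_S * _) _ (Nat.cast_ne_zero.mpr hM.ne' : (M : ℝ) ≠ 0)]
  ring

/-- Relay-side SINR (Eq. (19) of Theorem 1): with b-bit quantization errors `Φ_m`
i.i.d. uniform on `[-π/2^b, π/2^b)`, pairwise independent noises of power `N_0`,
and a self-interference matrix with pairwise independent zero-mean entries of
variance `η/M`, all three groups mutually independent, the SINR
`P_S·E[|uᵀh_S|²] / (E[|uᵀw_R|²] + (P_R/N)·E[|uᵀGv|²])` equals
`P_S·Ω_S·(1+(M-1)Q) / (N_0 + (η/M)·P_R)` where `Q = ((2^b/π)·sin(π/2^b))²`. -/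
theorem relay_side_SINR_los
    {Ωs : Type*} [MeasurableSpace Ωs] (μ : Measure Ωs) [IsProbabilityMeasure μ]
    (b M N : ℕ) (hb : 0 < b) (hM : 0 < M) (hN : 0 < N)
    (P_S P_R Ω_S N_0 η : ℝ)
    (hPS : 0 < P_S) (hPR : 0 < P_R) (hΩS : 0 < Ω_S) (hN0 : 0 < N_0) (hη : 0 < η)
    -- (i) quantization errors: i.i.d. uniform on [-π/2^b, π/2^b)
    (Φ : Fin M → Ωs → ℝ) (hΦmeas : ∀ m, Measurable (Φ m))
    (hΦindep : iIndepFun Φ μ)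
    (hΦunif : ∀ m, Measure.map (Φ m) μ =
      ENNReal.ofReal ((2 : ℝ) ^ b / (2 * π)) •
        volume.restrict (Set.Ico (-(π / 2 ^ b)) (π / 2 ^ b)))
    -- (ii) noises: pairwise independent, zero mean, power N_0
    (w : Fin M → Ωs → ℂ) (hwmem : ∀ m, MemLp (w m) 2 μ)
    (hwindep : ∀ m m', m ≠ m' → IndepFun (w m) (w m') μ)
    (hwmean : ∀ m, ∫ ω, w m ω ∂μ = 0)
    (hwvar : ∀ m, ∫ ω, ‖w m ω‖ ^ 2 ∂μ = N_0)
    -- unit-modulus phase-shift vectors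
    (u : Fin M → ℂ) (v : Fin N → ℂ)
    (hu : ∀ m, ‖u m‖ = 1) (hv : ∀ n, ‖v n‖ = 1)
    -- (iii) self-interference matrix: pairwise independent, zero mean, variance η/M
    (G : Fin M → Fin N → Ωs → ℂ) (hGmem : ∀ m n, MemLp (G m n) 2 μ)
    (hGindep : ∀ m n m' n', (m, n) ≠ (m', n') → IndepFun (G m n) (G m' n') μ)
    (hGmean : ∀ m n, ∫ ω, G m n ω ∂μ = 0)
    (hGvar : ∀ m n, ∫ ω, ‖G m n ω‖ ^ 2 ∂μ = η / M)
    -- the three groups are mutually independent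
    (hmutual : iIndep
      (![⨆ m, MeasurableSpace.comap (Φ m) inferInstance,
         ⨆ m, MeasurableSpace.comap (w m) inferInstance,
         ⨆ m, ⨆ n, MeasurableSpace.comap (G m n) inferInstance] : Fin 3 → MeasurableSpace Ωs)
      μ) :
    P_S * (∫ ω, ‖∑ m, (Real.sqrt Ω_S : ℂ) * Complex.exp (Complex.I * (Φ m ω : ℂ))‖ ^ 2 ∂μ) /
      ((∫ ω, ‖∑ m, u m * w m ω‖ ^ 2 ∂μ) +
        (P_R / N) * (∫ ω, ‖∑ m, ∑ n, u m * G m n ω * v n‖ ^ 2 ∂μ)) =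
    P_S * Ω_S * (1 + ((M : ℝ) - 1) * ((2 : ℝ) ^ b / π * Real.sin (π / 2 ^ b)) ^ 2) /
      (N_0 + (η / M) * P_R) :=
  relay_side_SINR_los_general μ b M N hM hN P_S P_R Ω_S N_0 η hΩS Φ hΦmeas hΦindep hΦunif w hwmem
    hwindep hwmean hwvar u v hu hv G hGmem hGindep hGmean hGvar
end

section
/- Let K, N_0, η, Ω_S, Ω_D, P_T, Q > 0, set α = 2K·N_0·Ω_D + 4K·N_0·Ω_S and P_R* = (−α + √(48·P_T·K·N_0·η·Ω_S·Ω_D + α²)) / (6·η·Ω_D). Then P_R* is the unique positive real number P_R satisfying the rate-balance equation ((P_T − P_R)·Ω_S·(2K/3)·Q) / (N_0 + (3η/(2K))·P_R) = (P_R·Ω_D·(K/3)·Q) / N_0; equivalently, P_R* is the unique positive root of the quadratic 3·η·Ω_D·P_R² + α·P_R − 4·K·N_0·Ω_S·P_T = 0. -/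
/-!
Clearing denominators turns the rate balance into the quadratic. Its leading coefficient is
positive and its constant term negative, so its roots have opposite signs and the positive one is
given by the quadratic formula with the `+√` branch.
-/

theorem eq_quadratic_pos_root_iff {a b c x : ℝ} (ha : 0 < a) (hc : 0 < c) :
    a * x ^ 2 + b * x - c = 0 ∧ 0 < x ↔ x = (-b + √(b ^ 2 + 4 * a * c)) / (2 * a) := by
  set s := √(b ^ 2 + 4 * a * c)
  have habs : |b| < s := (Real.lt_sqrt (abs_nonneg b)).2 (by rw [sq_abs]; nlinarith)
  have hdiscrim : discrim a b (-c) = s * s := by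
    rw [Real.mul_self_sqrt (by positivity), discrim]; ring
  rw [show a * x ^ 2 + b * x - c = a * (x * x) + b * x + -c by ring,
    quadratic_eq_zero_iff ha.ne' hdiscrim]
  have hnum_pos : 0 < -b + s := by linarith [le_abs_self b]
  have hnum_neg : -b - s < 0 := by linarith [neg_abs_le b]
  constructor
  · rintro ⟨hx | hx, hpos⟩
    · exact hx
    · exact absurd (hx ▸ hpos) (div_neg_of_neg_of_pos hnum_neg (by positivity)).not_gt
  · rintro rfl
    exact ⟨Or.inl rfl, div_pos hnum_pos (by positivity)⟩

theorem rate_balance_iff_quadratic {K N_0 η Ω_S Ω_D P_T Q x : ℝ}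
    (hK : K ≠ 0) (hN0 : N_0 ≠ 0) (hQ : Q ≠ 0) (hden : N_0 + 3 * η / (2 * K) * x ≠ 0) :
    (P_T - x) * Ω_S * (2 * K / 3) * Q / (N_0 + 3 * η / (2 * K) * x) =
        x * Ω_D * (K / 3) * Q / N_0 ↔
      3 * η * Ω_D * x ^ 2 + (2 * K * N_0 * Ω_D + 4 * K * N_0 * Ω_S) * x
        - 4 * K * N_0 * Ω_S * P_T = 0 := by
  rw [div_eq_div_iff hden hN0, ← sub_eq_zero]
  have hcross : (P_T - x) * Ω_S * (2 * K / 3) * Q * N_0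
      - x * Ω_D * (K / 3) * Q * (N_0 + 3 * η / (2 * K) * x) =
      -(Q / 6) * (3 * η * Ω_D * x ^ 2 + (2 * K * N_0 * Ω_D + 4 * K * N_0 * Ω_S) * x
        - 4 * K * N_0 * Ω_S * P_T) := by
    field_simp
    ring
  rw [hcross, mul_eq_zero, or_iff_right (by simpa using hQ)]

/-- Proposition 1 (power allocation): `P_R*` is the unique positive solution of the
rate-balance equation `((P_T−P_R)·Ω_S·(2K/3)·Q)/(N_0+(3η/(2K))·P_R)
= (P_R·Ω_D·(K/3)·Q)/N_0`, equivalently the unique positive root of the quadratic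
`3ηΩ_D·P_R² + α·P_R − 4K·N_0·Ω_S·P_T = 0`, where
`α = 2K·N_0·Ω_D + 4K·N_0·Ω_S`. -/
theorem optimal_relay_power_unique
    (K N_0 η Ω_S Ω_D P_T Q : ℝ)
    (hK : 0 < K) (hN0 : 0 < N_0) (hη : 0 < η) (hΩS : 0 < Ω_S) (hΩD : 0 < Ω_D)
    (hPT : 0 < P_T) (hQ : 0 < Q)
    (α PRstar : ℝ)
    (hα : α = 2 * K * N_0 * Ω_D + 4 * K * N_0 * Ω_S)
    (hPRstar : PRstar =
      (-α + Real.sqrt (48 * P_T * K * N_0 * η * Ω_S * Ω_D + α ^ 2)) / (6 * η * Ω_D)) :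
    (0 < PRstar ∧
      ((P_T - PRstar) * Ω_S * (2 * K / 3) * Q) / (N_0 + (3 * η / (2 * K)) * PRstar) =
        (PRstar * Ω_D * (K / 3) * Q) / N_0 ∧
      (∀ x : ℝ, 0 < x →
        ((P_T - x) * Ω_S * (2 * K / 3) * Q) / (N_0 + (3 * η / (2 * K)) * x) =
          (x * Ω_D * (K / 3) * Q) / N_0 → x = PRstar)) ∧
    (3 * η * Ω_D * PRstar ^ 2 + α * PRstar - 4 * K * N_0 * Ω_S * P_T = 0 ∧
      (∀ x : ℝ, 0 < x →
        3 * η * Ω_D * x ^ 2 + α * x - 4 * K * N_0 * Ω_S * P_T = 0 → x = PRstar)) := by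
  subst hα
  have hroot : ∀ x, 3 * η * Ω_D * x ^ 2 + (2 * K * N_0 * Ω_D + 4 * K * N_0 * Ω_S) * x
      - 4 * K * N_0 * Ω_S * P_T = 0 ∧ 0 < x ↔ x = PRstar := fun x => by
    rw [eq_quadratic_pos_root_iff (by positivity) (by positivity), hPRstar]
    -- the discriminant term `48 P_T K N_0 η Ω_S Ω_D` is `4 · (3 η Ω_D) · (4 K N_0 Ω_S P_T)`
    ring_nf
  have hrate : ∀ x, 0 < x →
      ((P_T - x) * Ω_S * (2 * K / 3) * Q / (N_0 + 3 * η / (2 * K) * x) =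
        x * Ω_D * (K / 3) * Q / N_0 ↔
      3 * η * Ω_D * x ^ 2 + (2 * K * N_0 * Ω_D + 4 * K * N_0 * Ω_S) * x
        - 4 * K * N_0 * Ω_S * P_T = 0) := fun x hx =>
    rate_balance_iff_quadratic hK.ne' hN0.ne' hQ.ne' (by positivity)
  obtain ⟨hquad, hpos⟩ := (hroot PRstar).2 rfl
  exact ⟨⟨hpos, (hrate PRstar hpos).2 hquad,
      fun x hx hx_rate => (hroot x).1 ⟨(hrate x hx).1 hx_rate, hx⟩⟩,
    hquad, fun x hx hx_quad => (hroot x).1 ⟨hx_quad, hx⟩⟩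
end

section
/- Let b, M be positive integers and Ω > 0. Let α_1, …, α_M be i.i.d. nonnegative random variables with density f(x) = (2x/Ω)·exp(−x²/Ω) for x ≥ 0, let Φ_1, …, Φ_M be i.i.d. real random variables uniform on [−π/2^b, π/2^b), and suppose all 2M random variables are mutually independent. Then E[|Σ_{m=1}^{M} α_m·e^{iΦ_m}|²] = M·Ω·(1 + (M−1)·(π/4)·Q), where Q = ((2^b/π)·sin(π/2^b))². -/
/-!
Write `Z m = α m · exp (i Φ m)`. Independence makes the `Z m` pairwise independent, so applying the
additivity of variance to their real and imaginary parts gives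
`E ‖∑ Z m‖² = ∑ (E ‖Z m‖² - ‖E (Z m)‖²) + ‖∑ E (Z m)‖²`.
Since `‖Z m‖ = |α m|`, `E ‖Z m‖² = E (α m)² = Ω`, and by independence
`E (Z m) = E (α m) · E (exp (i Φ m)) = √(π Ω) / 2 · (2^b / π) sin (π / 2^b)`.
The Rayleigh moments `E (α m)ⁿ = Ω^(n/2) Γ(n/2 + 1)` are Euler's Gamma integral after the
substitution `t = x² / Ω`.
-/

open MeasureTheory ProbabilityTheory Real

lemma Complex.sq_norm_eq_re_sq_add_im_sq (z : ℂ) : ‖z‖ ^ 2 = z.re ^ 2 + z.im ^ 2 := by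
  rw [Complex.sq_norm, Complex.normSq_apply]
  ring

lemma Complex.norm_ofReal_mul_exp_I_mul (x φ : ℝ) :
    ‖(x : ℂ) * Complex.exp (Complex.I * φ)‖ = |x| := by
  rw [norm_mul, mul_comm Complex.I, Complex.norm_exp_ofReal_mul_I, mul_one, Complex.norm_real,
    Real.norm_eq_abs]

lemma integral_exp_I_mul_neg_to_self (a : ℝ) :
    ∫ x in -a..a, Complex.exp (Complex.I * x) = 2 * Real.sin a := by
  rw [integral_exp_mul_complex Complex.I_ne_zero]
  push_cast
  rw [mul_comm Complex.I, mul_comm Complex.I, Complex.exp_mul_I, Complex.exp_mul_I,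
    Complex.cos_neg, Complex.sin_neg]
  field_simp
  ring_nf

section SecondMoment

variable {Ωs ι : Type*} [MeasurableSpace Ωs] {μ : Measure Ωs} [IsProbabilityMeasure μ]

theorem integral_sq_sum_of_pairwise_indepFun {X : ι → Ωs → ℝ} {s : Finset ι}
    (hX : ∀ i ∈ s, MemLp (X i) 2 μ) (h : Set.Pairwise ↑s fun i j => X i ⟂ᵢ[μ] X j) :
    ∫ ω, (∑ i ∈ s, X i ω) ^ 2 ∂μ = ∑ i ∈ s, Var[X i; μ] + (∑ i ∈ s, μ[X i]) ^ 2 := by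
  have hvar := variance_eq_sub (memLp_finsetSum' s hX)
  simp only [Finset.sum_apply, Pi.pow_apply] at hvar
  rw [IndepFun.variance_sum hX h,
    integral_finsetSum s fun i hi => (hX i hi).integrable one_le_two] at hvar
  linarith

theorem variance_re_add_variance_im {Z : Ωs → ℂ} (hZ : MemLp Z 2 μ) :
    Var[fun ω => (Z ω).re; μ] + Var[fun ω => (Z ω).im; μ] =
      ∫ ω, ‖Z ω‖ ^ 2 ∂μ - ‖∫ ω, Z ω ∂μ‖ ^ 2 := by
  have hre : MemLp (fun ω => (Z ω).re) 2 μ := hZ.re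
  have him : MemLp (fun ω => (Z ω).im) 2 μ := hZ.im
  have hre_int : ∫ ω, (Z ω).re ∂μ = (∫ ω, Z ω ∂μ).re := integral_re (hZ.integrable one_le_two)
  have him_int : ∫ ω, (Z ω).im ∂μ = (∫ ω, Z ω ∂μ).im := integral_im (hZ.integrable one_le_two)
  simp_rw [variance_eq_sub hre, variance_eq_sub him, Complex.sq_norm_eq_re_sq_add_im_sq,
    integral_add hre.integrable_sq him.integrable_sq, Pi.pow_apply, hre_int, him_int]
  ring

theorem integral_norm_sq_sum_of_pairwise_indepFun {Z : ι → Ωs → ℂ} {s : Finset ι}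
    (hZ : ∀ i ∈ s, MemLp (Z i) 2 μ) (h : Set.Pairwise ↑s fun i j => Z i ⟂ᵢ[μ] Z j) :
    ∫ ω, ‖∑ i ∈ s, Z i ω‖ ^ 2 ∂μ =
      ∑ i ∈ s, (∫ ω, ‖Z i ω‖ ^ 2 ∂μ - ‖∫ ω, Z i ω ∂μ‖ ^ 2) + ‖∑ i ∈ s, ∫ ω, Z i ω ∂μ‖ ^ 2 := by
  have hre : ∀ i ∈ s, MemLp (fun ω => (Z i ω).re) 2 μ := fun i hi => (hZ i hi).re
  have him : ∀ i ∈ s, MemLp (fun ω => (Z i ω).im) 2 μ := fun i hi => (hZ i hi).im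
  have hre_indep : Set.Pairwise ↑s fun i j => (fun ω => (Z i ω).re) ⟂ᵢ[μ] (fun ω => (Z j ω).re) :=
    fun i hi j hj hij => (h hi hj hij).comp Complex.measurable_re Complex.measurable_re
  have him_indep : Set.Pairwise ↑s fun i j => (fun ω => (Z i ω).im) ⟂ᵢ[μ] (fun ω => (Z j ω).im) :=
    fun i hi j hj hij => (h hi hj hij).comp Complex.measurable_im Complex.measurable_im
  have hre_int : ∀ i ∈ s, ∫ ω, (Z i ω).re ∂μ = (∫ ω, Z i ω ∂μ).re :=
    fun i hi => integral_re ((hZ i hi).integrable one_le_two)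
  have him_int : ∀ i ∈ s, ∫ ω, (Z i ω).im ∂μ = (∫ ω, Z i ω ∂μ).im :=
    fun i hi => integral_im ((hZ i hi).integrable one_le_two)
  rw [← Finset.sum_congr rfl fun i hi => variance_re_add_variance_im (hZ i hi)]
  simp_rw [Complex.sq_norm_eq_re_sq_add_im_sq, Complex.re_sum, Complex.im_sum]
  rw [integral_add (memLp_finsetSum s hre).integrable_sq (memLp_finsetSum s him).integrable_sq,
    integral_sq_sum_of_pairwise_indepFun hre hre_indep,
    integral_sq_sum_of_pairwise_indepFun him him_indep,
    Finset.sum_add_distrib, Finset.sum_congr rfl hre_int, Finset.sum_congr rfl him_int]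
  ring

theorem integral_norm_sq_sum_of_pairwise_indepFun_of_moments {Z : ι → Ωs → ℂ} {s : Finset ι}
    (hZ : ∀ i ∈ s, MemLp (Z i) 2 μ) (h : Set.Pairwise ↑s fun i j => Z i ⟂ᵢ[μ] Z j) {σ : ℝ} {z : ℂ}
    (hσ : ∀ i ∈ s, ∫ ω, ‖Z i ω‖ ^ 2 ∂μ = σ) (hz : ∀ i ∈ s, ∫ ω, Z i ω ∂μ = z) :
    ∫ ω, ‖∑ i ∈ s, Z i ω‖ ^ 2 ∂μ = s.card * σ + s.card * (s.card - 1) * ‖z‖ ^ 2 := by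
  rw [integral_norm_sq_sum_of_pairwise_indepFun hZ h,
    Finset.sum_congr rfl fun i hi => by rw [hσ i hi, hz i hi], Finset.sum_congr rfl hz]
  simp only [Finset.sum_const, nsmul_eq_mul, norm_mul, Complex.norm_natCast]
  ring

end SecondMoment

lemma ProbabilityTheory.iIndepFun.indepFun_comp_sumElim {Ωs ι β : Type*} [MeasurableSpace Ωs]
    [MeasurableSpace β] {μ : Measure Ωs} {X Y : ι → Ωs → ℝ} (hindep : iIndepFun (Sum.elim X Y) μ)
    (hX : ∀ i, Measurable (X i)) (hY : ∀ i, Measurable (Y i)) {g : ℝ × ℝ → β} (hg : Measurable g)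
    {i j : ι} (hij : i ≠ j) :
    (fun ω => g (X i ω, Y i ω)) ⟂ᵢ[μ] (fun ω => g (X j ω, Y j ω)) :=
  (hindep.indepFun_prodMk_prodMk (by rintro (k | k) <;> simp [hX, hY])
    (.inl i) (.inr i) (.inl j) (.inr j) (by simp [hij]) (by simp) (by simp) (by simp [hij])).comp
    hg hg

section Transfer

variable {Ωs E F : Type*} [MeasurableSpace Ωs] [MeasurableSpace E] [NormedAddCommGroup F]
  [NormedSpace ℝ F] {μ : Measure Ωs} {ν : Measure E} {X : Ωs → E} {f : E → ℝ} {g : E → F}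

lemma integrable_comp_of_map_eq_withDensity (hX : Measurable X) (hf : Measurable f)
    (hf_nonneg : ∀ x, 0 ≤ f x) (hmap : μ.map X = ν.withDensity fun x => ENNReal.ofReal (f x))
    (hg : AEStronglyMeasurable g (μ.map X)) (hfg : Integrable (fun x => f x • g x) ν) :
    Integrable (fun ω => g (X ω)) μ := by
  rw [← Function.comp_def, ← integrable_map_measure hg hX.aemeasurable, hmap,
    integrable_withDensity_iff_integrable_smul' (by fun_prop) (by simp)]
  simpa only [ENNReal.toReal_ofReal (hf_nonneg _)] using hfg

lemma integral_comp_of_map_eq_withDensity (hX : Measurable X) (hf : Measurable f)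
    (hf_nonneg : ∀ x, 0 ≤ f x) (hmap : μ.map X = ν.withDensity fun x => ENNReal.ofReal (f x))
    (hg : AEStronglyMeasurable g (μ.map X)) :
    ∫ ω, g (X ω) ∂μ = ∫ x, f x • g x ∂ν := by
  rw [← integral_map hX.aemeasurable hg, hmap,
    integral_withDensity_eq_integral_toReal_smul (by fun_prop) (by simp)]
  simp only [ENNReal.toReal_ofReal (hf_nonneg _)]

end Transfer

section Rayleigh

noncomputable def rayleighPDFReal (Ω x : ℝ) : ℝ :=
  if 0 ≤ x then 2 * x / Ω * exp (-x ^ 2 / Ω) else 0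

noncomputable def rayleighReal (Ω : ℝ) : Measure ℝ :=
  volume.withDensity fun x => ENNReal.ofReal (rayleighPDFReal Ω x)

lemma rayleighPDFReal_nonneg {Ω : ℝ} (hΩ : 0 ≤ Ω) (x : ℝ) : 0 ≤ rayleighPDFReal Ω x := by
  unfold rayleighPDFReal
  split_ifs
  · positivity
  · rfl

lemma measurable_rayleighPDFReal (Ω : ℝ) : Measurable (rayleighPDFReal Ω) :=
  Measurable.ite measurableSet_Ici (by fun_prop) measurable_const

lemma rayleighPDFReal_mul_pow (Ω : ℝ) (n : ℕ) :
    (fun x => rayleighPDFReal Ω x * x ^ n) = (Set.Ioi 0).indicator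
      fun x => 2 / Ω * (x ^ ((n + 1 : ℕ) : ℝ) * exp (-Ω⁻¹ * x ^ (2 : ℝ))) := by
  ext x
  rcases lt_trichotomy x 0 with hx | rfl | hx
  · simp [rayleighPDFReal, hx.not_ge, hx.not_gt]
  · simp [rayleighPDFReal]
  · simp only [rayleighPDFReal, hx.le, if_true, Set.indicator_of_mem (Set.mem_Ioi.2 hx),
      rpow_natCast, rpow_two]
    ring_nf

lemma integrable_rayleighPDFReal_mul_pow {Ω : ℝ} (hΩ : 0 < Ω) (n : ℕ) :
    Integrable fun x => rayleighPDFReal Ω x * x ^ n := by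
  rw [rayleighPDFReal_mul_pow]
  exact IntegrableOn.integrable_indicator
    ((integrableOn_rpow_mul_exp_neg_mul_rpow (by push_cast; linarith) two_pos
      (inv_pos.2 hΩ)).const_mul _) measurableSet_Ioi

lemma integral_rayleighPDFReal_mul_pow {Ω : ℝ} (hΩ : 0 < Ω) (n : ℕ) :
    ∫ x, rayleighPDFReal Ω x * x ^ n = Ω ^ ((n : ℝ) / 2) * Gamma (n / 2 + 1) := by
  rw [rayleighPDFReal_mul_pow, integral_indicator measurableSet_Ioi, integral_const_mul,
    integral_rpow_mul_exp_neg_mul_rpow two_pos (by push_cast; linarith) (inv_pos.2 hΩ)]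
  push_cast
  rw [inv_rpow hΩ.le, ← rpow_neg hΩ.le, show -(-((n : ℝ) + 1 + 1) / 2) = n / 2 + 1 by ring,
    show ((n : ℝ) + 1 + 1) / 2 = n / 2 + 1 by ring, rpow_add hΩ, rpow_one]
  field_simp

variable {Ωs : Type*} [MeasurableSpace Ωs] {μ : Measure Ωs} {X : Ωs → ℝ} {Ω : ℝ}

lemma integrable_pow_of_map_eq_rayleighReal (hX : Measurable X) (hΩ : 0 < Ω)
    (hmap : μ.map X = rayleighReal Ω) (n : ℕ) : Integrable (fun ω => X ω ^ n) μ :=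
  integrable_comp_of_map_eq_withDensity (g := fun x => x ^ n) hX (measurable_rayleighPDFReal Ω)
    (rayleighPDFReal_nonneg hΩ.le) hmap (by fun_prop) (integrable_rayleighPDFReal_mul_pow hΩ n)

lemma integral_pow_of_map_eq_rayleighReal (hX : Measurable X) (hΩ : 0 < Ω)
    (hmap : μ.map X = rayleighReal Ω) (n : ℕ) :
    ∫ ω, X ω ^ n ∂μ = Ω ^ ((n : ℝ) / 2) * Gamma (n / 2 + 1) := by
  rw [integral_comp_of_map_eq_withDensity (g := fun x => x ^ n) hX (measurable_rayleighPDFReal Ω)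
    (rayleighPDFReal_nonneg hΩ.le) hmap (by fun_prop)]
  exact integral_rayleighPDFReal_mul_pow hΩ n

lemma integral_of_map_eq_rayleighReal (hX : Measurable X) (hΩ : 0 < Ω)
    (hmap : μ.map X = rayleighReal Ω) : ∫ ω, X ω ∂μ = √(π * Ω) / 2 := by
  have h := integral_pow_of_map_eq_rayleighReal hX hΩ hmap 1
  simp only [pow_one, Nat.cast_one] at h
  rw [h, Gamma_add_one one_half_pos.ne', Gamma_one_half_eq, ← sqrt_eq_rpow, sqrt_mul' _ hΩ.le]
  ring

lemma integral_sq_of_map_eq_rayleighReal (hX : Measurable X) (hΩ : 0 < Ω)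
    (hmap : μ.map X = rayleighReal Ω) : ∫ ω, X ω ^ 2 ∂μ = Ω := by
  rw [integral_pow_of_map_eq_rayleighReal hX hΩ hmap 2]
  norm_num

end Rayleigh

lemma integral_exp_I_mul_of_map_eq_smul_restrict_Ico {Ωs : Type*} [MeasurableSpace Ωs]
    {μ : Measure Ωs} {Φ : Ωs → ℝ} {a c : ℝ} (hΦ : Measurable Φ) (ha : 0 ≤ a) (hc : 0 ≤ c)
    (hmap : μ.map Φ = ENNReal.ofReal c • volume.restrict (Set.Ico (-a) a)) :
    ∫ ω, Complex.exp (Complex.I * Φ ω) ∂μ = 2 * c * Real.sin a := by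
  rw [← integral_map (f := fun x : ℝ => Complex.exp (Complex.I * x)) hΦ.aemeasurable
      (by fun_prop), hmap, integral_smul_measure,
    ENNReal.toReal_ofReal hc, integral_Ico_eq_integral_Ioo, ← integral_Ioc_eq_integral_Ioo,
    ← intervalIntegral.integral_of_le (by linarith), integral_exp_I_mul_neg_to_self]
  simp only [Complex.real_smul]
  ring

theorem beamforming_gain_rayleigh_general
    {Ωs : Type*} [MeasurableSpace Ωs] (μ : Measure Ωs) [IsProbabilityMeasure μ]
    (b M : ℕ) (Ω : ℝ) (hΩ : 0 < Ω)
    (α Φ : Fin M → Ωs → ℝ)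
    (hαmeas : ∀ m, Measurable (α m)) (hΦmeas : ∀ m, Measurable (Φ m))
    (hαpdf : ∀ m, Measure.map (α m) μ = volume.withDensity
      (fun x => ENNReal.ofReal (if 0 ≤ x then 2 * x / Ω * Real.exp (-x ^ 2 / Ω) else 0)))
    (hΦunif : ∀ m, Measure.map (Φ m) μ =
      ENNReal.ofReal ((2 : ℝ) ^ b / (2 * π)) •
        volume.restrict (Set.Ico (-(π / 2 ^ b)) (π / 2 ^ b)))
    -- all 2M random variables are mutually independent
    (hindep : iIndepFun (Sum.elim α Φ) μ) :
    (∫ ω, ‖∑ m, (α m ω : ℂ) * Complex.exp (Complex.I * (Φ m ω : ℂ))‖ ^ 2 ∂μ) =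
      (M : ℝ) * Ω *
        (1 + ((M : ℝ) - 1) * (π / 4) * ((2 : ℝ) ^ b / π * Real.sin (π / 2 ^ b)) ^ 2) := by
  set Z : Fin M → Ωs → ℂ := fun m ω => (α m ω : ℂ) * Complex.exp (Complex.I * (Φ m ω : ℂ))
  set z : ℝ := √(π * Ω) / 2 * ((2 : ℝ) ^ b / π * Real.sin (π / 2 ^ b))
  have hαmap : ∀ m, μ.map (α m) = rayleighReal Ω := hαpdf
  have hZ_memLp : ∀ m, MemLp (Z m) 2 μ := fun m =>
    ((memLp_two_iff_integrable_sq (hαmeas m).aestronglyMeasurable).2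
      (integrable_pow_of_map_eq_rayleighReal (hαmeas m) hΩ (hαmap m) 2)).of_le (by fun_prop)
      (.of_forall fun ω => by simp only [Z, Complex.norm_ofReal_mul_exp_I_mul, norm_eq_abs, le_rfl])
  have hZ_indep : Pairwise fun m n => Z m ⟂ᵢ[μ] Z n := fun m n hmn =>
    hindep.indepFun_comp_sumElim hαmeas hΦmeas
      (g := fun p => (p.1 : ℂ) * Complex.exp (Complex.I * p.2)) (by fun_prop) hmn
  have hZ_sq : ∀ m, ∫ ω, ‖Z m ω‖ ^ 2 ∂μ = Ω := fun m => by
    simp only [Z, Complex.norm_ofReal_mul_exp_I_mul, sq_abs]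
    exact integral_sq_of_map_eq_rayleighReal (hαmeas m) hΩ (hαmap m)
  have hZ_mean : ∀ m, ∫ ω, Z m ω ∂μ = z := fun m => by
    have hαΦ : α m ⟂ᵢ[μ] Φ m := hindep.indepFun (i := .inl m) (j := .inr m) (by simp)
    rw [hαΦ.integral_fun_comp_mul_comp (f := Complex.ofReal)
      (g := fun x : ℝ => Complex.exp (Complex.I * x)) (by fun_prop) (by fun_prop) (by fun_prop)
      (by fun_prop), integral_complex_ofReal,
      integral_of_map_eq_rayleighReal (hαmeas m) hΩ (hαmap m),
      integral_exp_I_mul_of_map_eq_smul_restrict_Ico (hΦmeas m) (by positivity) (by positivity)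
        (hΦunif m)]
    push_cast [z]
    field_simp
  rw [integral_norm_sq_sum_of_pairwise_indepFun_of_moments (fun m _ => hZ_memLp m)
    (fun m _ n _ hmn => hZ_indep hmn) (fun m _ => hZ_sq m) (fun m _ => hZ_mean m)]
  simp only [Finset.card_univ, Fintype.card_fin, Complex.norm_real, norm_eq_abs, sq_abs, z, mul_pow,
    div_pow, sq_sqrt (by positivity : 0 ≤ π * Ω)]
  ring

/-- Rayleigh-fading beamforming-gain identity (Eq. (ez3)): for i.i.d. Rayleigh
amplitudes `α_m` with density `(2x/Ω)·exp(−x²/Ω)` on `x ≥ 0` and i.i.d.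
quantization errors `Φ_m` uniform on `[-π/2^b, π/2^b)`, all `2M` variables
mutually independent, `E[|Σ_{m=1}^M α_m·e^{iΦ_m}|²] = M·Ω·(1+(M−1)·(π/4)·Q)`
where `Q = ((2^b/π)·sin(π/2^b))²`. -/
theorem beamforming_gain_rayleigh
    {Ωs : Type*} [MeasurableSpace Ωs] (μ : Measure Ωs) [IsProbabilityMeasure μ]
    (b M : ℕ) (hb : 0 < b) (hM : 0 < M) (Ω : ℝ) (hΩ : 0 < Ω)
    (α Φ : Fin M → Ωs → ℝ)
    (hαmeas : ∀ m, Measurable (α m)) (hΦmeas : ∀ m, Measurable (Φ m))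
    (hαnn : ∀ m ω, 0 ≤ α m ω)
    (hαpdf : ∀ m, Measure.map (α m) μ = volume.withDensity
      (fun x => ENNReal.ofReal (if 0 ≤ x then 2 * x / Ω * Real.exp (-x ^ 2 / Ω) else 0)))
    (hΦunif : ∀ m, Measure.map (Φ m) μ =
      ENNReal.ofReal ((2 : ℝ) ^ b / (2 * π)) •
        volume.restrict (Set.Ico (-(π / 2 ^ b)) (π / 2 ^ b)))
    -- all 2M random variables are mutually independent
    (hindep : iIndepFun (Sum.elim α Φ) μ) :
    (∫ ω, ‖∑ m, (α m ω : ℂ) * Complex.exp (Complex.I * (Φ m ω : ℂ))‖ ^ 2 ∂μ) =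
      (M : ℝ) * Ω *
        (1 + ((M : ℝ) - 1) * (π / 4) * ((2 : ℝ) ^ b / π * Real.sin (π / 2 ^ b)) ^ 2) :=
  beamforming_gain_rayleigh_general μ b M Ω hΩ α Φ hαmeas hΦmeas hαpdf hΦunif hindep
end

section
/- Let b, N be positive integers, P_R, Ω_D, N_0 > 0, let β_1, …, β_N be i.i.d. nonnegative random variables with density f(x) = (2x/Ω_D)·exp(−x²/Ω_D) on x ≥ 0, let Ψ_1, …, Ψ_N be i.i.d. real random variables uniform on [−π/2^b, π/2^b), all 2N variables mutually independent, and set v^T h_D = Σ_{n=1}^{N} β_n·e^{iΨ_n}. Then (P_R/N)·E[|v^T h_D|²] / N_0 = P_R·Ω_D·(1 + (N−1)·(π/4)·Q) / N_0, where Q = ((2^b/π)·sin(π/2^b))². -/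
open MeasureTheory ProbabilityTheory Real

/-!
Write `Z n = β n · exp (i Ψ n)`. The `Z n` are pairwise independent, so applying additivity of
the variance to their real and imaginary parts gives
`E ‖∑ Z n‖² = ∑ (E ‖Z n‖² - ‖E Z n‖²) + ‖∑ E Z n‖²`.
Here `E ‖Z n‖² = E β² = Ω_D`, and by independence of `β n` and `Ψ n`,
`E Z n = E β · E exp (i Ψ) = (√(π Ω_D) / 2) · (sin a / a)` with `a = π / 2 ^ b`;
the Rayleigh moments `E βᵖ = Ω_D ^ (p/2) Γ(p/2 + 1)` are Gaussian-type Gamma integrals.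
So `E ‖∑ Z n‖² = N Ω_D + N (N - 1) (π Ω_D / 4) (sin a / a)²`.
-/

namespace ProbabilityTheory

open Set

noncomputable def rayleighPDFReal (v x : ℝ) : ℝ :=
  if 0 ≤ x then 2 * x / v * exp (-x ^ 2 / v) else 0

section RayleighPDF

variable {v : ℝ}

lemma rayleighPDFReal_nonneg (hv : 0 ≤ v) (x : ℝ) : 0 ≤ rayleighPDFReal v x := by
  unfold rayleighPDFReal; split_ifs <;> positivity

@[fun_prop]
lemma measurable_rayleighPDFReal : Measurable (rayleighPDFReal v) :=
  Measurable.ite measurableSet_Ici (by fun_prop) measurable_const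

lemma rayleighPDFReal_mul_eq_indicator (g : ℝ → ℝ) :
    (fun x => rayleighPDFReal v x * g x) =
      (Ioi 0).indicator (fun x => 2 / v * (x * g x * exp (-v⁻¹ * x ^ 2))) := by
  ext x
  rcases lt_trichotomy x 0 with hx | rfl | hx
  · simp [rayleighPDFReal, hx.not_ge, hx.not_gt]
  · simp [rayleighPDFReal]
  · simp only [rayleighPDFReal, hx.le, if_true, indicator_of_mem (show x ∈ Ioi 0 from hx)]
    ring_nf

lemma integrable_rayleighPDFReal_mul_rpow (hv : 0 < v) {p : ℝ} (hp : -2 < p) :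
    Integrable (fun x => rayleighPDFReal v x * x ^ p) := by
  rw [rayleighPDFReal_mul_eq_indicator, integrable_indicator_iff measurableSet_Ioi]
  refine ((integrableOn_rpow_mul_exp_neg_mul_sq (inv_pos.2 hv) (s := p + 1) (by linarith)).congr_fun
    (fun x hx => ?_) measurableSet_Ioi).const_mul (2 / v)
  rw [rpow_add hx, rpow_one, mul_comm (x ^ p)]

lemma integral_rayleighPDFReal_mul_rpow (hv : 0 < v) {p : ℝ} (hp : -2 < p) :
    ∫ x, rayleighPDFReal v x * x ^ p = v ^ (p / 2) * Gamma (p / 2 + 1) := by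
  rw [rayleighPDFReal_mul_eq_indicator, integral_indicator measurableSet_Ioi, integral_const_mul,
    setIntegral_congr_fun measurableSet_Ioi (fun x (hx : 0 < x) => by
      rw [← rpow_natCast x 2, Nat.cast_ofNat, mul_comm x, ← rpow_add_one hx.ne']),
    integral_rpow_mul_exp_neg_mul_rpow two_pos (by linarith) (inv_pos.2 hv),
    inv_rpow hv.le, ← rpow_neg hv.le, show -(-(p + 1 + 1) / 2) = p / 2 + 1 by ring,
    show (p + 1 + 1) / 2 = p / 2 + 1 by ring, rpow_add_one hv.ne']
  field_simp

end RayleighPDF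

variable {Ω : Type*} [MeasurableSpace Ω] {μ : Measure Ω}

section Density

variable {f : ℝ → ℝ} {X : Ω → ℝ}

lemma integral_comp_eq_integral_density_mul (hf : Measurable f) (hf0 : ∀ x, 0 ≤ f x)
    (hX : AEMeasurable X μ)
    (hXf : μ.map X = volume.withDensity (fun x => ENNReal.ofReal (f x)))
    {g : ℝ → ℝ} (hg : Measurable g) :
    ∫ ω, g (X ω) ∂μ = ∫ x, f x * g x := by
  rw [← integral_map hX hg.aestronglyMeasurable, hXf]
  exact (integral_withDensity_eq_integral_smul hf.real_toNNReal g).trans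
    (integral_congr_ae (.of_forall fun x => by simp [NNReal.smul_def, hf0 x]))

lemma integrable_comp_of_integrable_density_mul (hf : Measurable f) (hf0 : ∀ x, 0 ≤ f x)
    (hX : AEMeasurable X μ)
    (hXf : μ.map X = volume.withDensity (fun x => ENNReal.ofReal (f x)))
    {g : ℝ → ℝ} (hg : Measurable g) (hfg : Integrable (fun x => f x * g x)) :
    Integrable (fun ω => g (X ω)) μ := by
  refine (integrable_map_measure hg.aestronglyMeasurable hX).mp ?_
  rw [hXf]
  exact (integrable_withDensity_iff_integrable_smul hf.real_toNNReal).mpr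
    (hfg.congr (.of_forall fun x => by simp [NNReal.smul_def, hf0 x]))

end Density

section Rayleigh

variable {v : ℝ} {X : Ω → ℝ} (hv : 0 < v) (hX : AEMeasurable X μ)
  (hXf : μ.map X = volume.withDensity (fun x => ENNReal.ofReal (rayleighPDFReal v x)))
include hv hX hXf

lemma integral_rpow_of_map_eq_rayleigh {p : ℝ} (hp : -2 < p) :
    ∫ ω, X ω ^ p ∂μ = v ^ (p / 2) * Gamma (p / 2 + 1) := by
  rw [integral_comp_eq_integral_density_mul measurable_rayleighPDFReal
    (rayleighPDFReal_nonneg hv.le) hX hXf (g := fun x => x ^ p) (by fun_prop),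
    integral_rayleighPDFReal_mul_rpow hv hp]

lemma integrable_rpow_of_map_eq_rayleigh {p : ℝ} (hp : -2 < p) :
    Integrable (fun ω => X ω ^ p) μ :=
  integrable_comp_of_integrable_density_mul measurable_rayleighPDFReal
    (rayleighPDFReal_nonneg hv.le) hX hXf (g := fun x => x ^ p) (by fun_prop)
    (integrable_rayleighPDFReal_mul_rpow hv hp)

lemma integral_of_map_eq_rayleigh : ∫ ω, X ω ∂μ = √(π * v) / 2 := by
  have h := integral_rpow_of_map_eq_rayleigh hv hX hXf (p := 1) (by norm_num)
  simp only [rpow_one] at h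
  rw [h, ← sqrt_eq_rpow, Gamma_add_one one_half_pos.ne', Gamma_one_half_eq, sqrt_mul' _ hv.le]
  ring

lemma integral_sq_of_map_eq_rayleigh : ∫ ω, X ω ^ 2 ∂μ = v := by
  have h := integral_rpow_of_map_eq_rayleigh hv hX hXf (p := 2) (by norm_num)
  simp only [rpow_two] at h
  rw [h]
  norm_num

lemma memLp_two_of_map_eq_rayleigh : MemLp X 2 μ :=
  (memLp_two_iff_integrable_sq hX.aestronglyMeasurable).2 <| by
    simpa only [rpow_two] using integrable_rpow_of_map_eq_rayleigh hv hX hXf (p := 2) (by norm_num)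

end Rayleigh

lemma integral_cexp_I_mul_symm (a : ℝ) :
    ∫ x in -a..a, Complex.exp (Complex.I * x) = 2 * Complex.sin a := by
  rw [integral_exp_mul_complex Complex.I_ne_zero]
  push_cast
  rw [Complex.sin]
  field_simp
  rw [Complex.I_sq]
  ring

lemma integral_cexp_I_mul_of_map_eq_uniform {a : ℝ} (ha : 0 < a) {X : Ω → ℝ}
    (hX : AEMeasurable X μ)
    (hXu : μ.map X = ENNReal.ofReal (1 / (2 * a)) • volume.restrict (Ico (-a) a)) :
    ∫ ω, Complex.exp (Complex.I * X ω) ∂μ = Real.sin a / a := by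
  rw [← integral_map (f := fun x : ℝ => Complex.exp (Complex.I * x)) hX (by fun_prop), hXu,
    integral_smul_measure, ENNReal.toReal_ofReal (by positivity), integral_Ico_eq_integral_Ioo,
    ← integral_Ioc_eq_integral_Ioo, ← intervalIntegral.integral_of_le (by linarith),
    integral_cexp_I_mul_symm, Complex.real_smul]
  push_cast
  field_simp

private lemma sq_norm_eq_re_sq_add_im_sq (z : ℂ) : ‖z‖ ^ 2 = z.re ^ 2 + z.im ^ 2 := by
  rw [Complex.sq_norm, Complex.normSq_apply]; ring

private lemma integral_complex_re {Z : Ω → ℂ} (hZ : Integrable Z μ) :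
    ∫ ω, (Z ω).re ∂μ = (∫ ω, Z ω ∂μ).re := integral_re hZ

private lemma integral_complex_im {Z : Ω → ℂ} (hZ : Integrable Z μ) :
    ∫ ω, (Z ω).im ∂μ = (∫ ω, Z ω ∂μ).im := integral_im hZ

section SecondMoment

variable [IsProbabilityMeasure μ] {ι : Type*} {s : Finset ι}

lemma integral_sum_sq_eq_sum_variance_add_sq {X : ι → Ω → ℝ} (hX : ∀ i ∈ s, MemLp (X i) 2 μ)
    (hindep : Set.Pairwise ↑s fun i j => X i ⟂ᵢ[μ] X j) :
    ∫ ω, (∑ i ∈ s, X i ω) ^ 2 ∂μ = ∑ i ∈ s, Var[X i; μ] + (∑ i ∈ s, ∫ ω, X i ω ∂μ) ^ 2 := by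
  have hvar := variance_eq_sub (memLp_finsetSum' s hX)
  simp only [Pi.pow_apply, Finset.sum_apply] at hvar
  rw [IndepFun.variance_sum hX hindep,
    integral_finsetSum s fun i hi => (hX i hi).integrable one_le_two] at hvar
  linarith

lemma variance_re_add_variance_im {Z : Ω → ℂ} (hZ : MemLp Z 2 μ) :
    Var[fun ω => (Z ω).re; μ] + Var[fun ω => (Z ω).im; μ] =
      ∫ ω, ‖Z ω‖ ^ 2 ∂μ - ‖∫ ω, Z ω ∂μ‖ ^ 2 := by
  have hre : MemLp (fun ω => (Z ω).re) 2 μ := hZ.re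
  have him : MemLp (fun ω => (Z ω).im) 2 μ := hZ.im
  have hZ1 := hZ.integrable one_le_two
  rw [variance_eq_sub hre, variance_eq_sub him]
  simp only [sq_norm_eq_re_sq_add_im_sq, Pi.pow_apply]
  rw [integral_add hre.integrable_sq him.integrable_sq, integral_complex_re hZ1,
    integral_complex_im hZ1]
  ring

lemma integral_norm_sum_sq_of_pairwise_indep {Z : ι → Ω → ℂ} (hZ : ∀ i ∈ s, MemLp (Z i) 2 μ)
    (hindep : Set.Pairwise ↑s fun i j => Z i ⟂ᵢ[μ] Z j) :
    ∫ ω, ‖∑ i ∈ s, Z i ω‖ ^ 2 ∂μ =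
      ∑ i ∈ s, (∫ ω, ‖Z i ω‖ ^ 2 ∂μ - ‖∫ ω, Z i ω ∂μ‖ ^ 2) + ‖∑ i ∈ s, ∫ ω, Z i ω ∂μ‖ ^ 2 := by
  have hre : ∀ i ∈ s, MemLp (fun ω => (Z i ω).re) 2 μ := fun i hi => (hZ i hi).re
  have him : ∀ i ∈ s, MemLp (fun ω => (Z i ω).im) 2 μ := fun i hi => (hZ i hi).im
  have hZ1 : ∀ i ∈ s, Integrable (Z i) μ := fun i hi => (hZ i hi).integrable one_le_two
  rw [← Finset.sum_congr rfl fun i hi => variance_re_add_variance_im (hZ i hi),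
    Finset.sum_add_distrib]
  simp only [sq_norm_eq_re_sq_add_im_sq, Complex.re_sum, Complex.im_sum]
  rw [integral_add (memLp_finsetSum s hre).integrable_sq (memLp_finsetSum s him).integrable_sq,
    integral_sum_sq_eq_sum_variance_add_sq hre fun i hi j hj hij =>
      (hindep hi hj hij).comp Complex.measurable_re Complex.measurable_re,
    integral_sum_sq_eq_sum_variance_add_sq him fun i hi j hj hij =>
      (hindep hi hj hij).comp Complex.measurable_im Complex.measurable_im,
    Finset.sum_congr rfl fun i hi => integral_complex_re (hZ1 i hi),
    Finset.sum_congr rfl fun i hi => integral_complex_im (hZ1 i hi)]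
  ring

end SecondMoment

lemma iIndepFun.indepFun_comp_sum_elim {ι α β : Type*} [MeasurableSpace α] [MeasurableSpace β]
    {X Y : ι → Ω → α} (h : iIndepFun (Sum.elim X Y) μ) (hX : ∀ i, Measurable (X i))
    (hY : ∀ i, Measurable (Y i)) {φ : α → α → β} (hφ : Measurable (Function.uncurry φ))
    {i j : ι} (hij : i ≠ j) :
    (fun ω => φ (X i ω) (Y i ω)) ⟂ᵢ[μ] (fun ω => φ (X j ω) (Y j ω)) :=
  (h.indepFun_prodMk_prodMk (Sum.forall.2 ⟨hX, hY⟩) (.inl i) (.inr i) (.inl j) (.inr j)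
    (by simpa using hij) (by simp) (by simp) (by simpa using hij)).comp hφ hφ

section Phasor

variable {A Ψ : Ω → ℝ}

lemma norm_ofReal_mul_cexp_I_mul (r θ : ℝ) :
    ‖(r : ℂ) * Complex.exp (Complex.I * θ)‖ = ‖r‖ := by
  rw [norm_mul, mul_comm Complex.I, Complex.norm_exp_ofReal_mul_I, mul_one, Complex.norm_real]

lemma memLp_two_ofReal_mul_cexp (hA : MemLp A 2 μ) (hΨ : Measurable Ψ) :
    MemLp (fun ω => (A ω : ℂ) * Complex.exp (Complex.I * Ψ ω)) 2 μ :=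
  hA.congr_norm ((Complex.continuous_ofReal.comp_aestronglyMeasurable hA.1).mul
      (by fun_prop : Measurable fun ω => Complex.exp (Complex.I * Ψ ω)).aestronglyMeasurable)
    (.of_forall fun ω => (norm_ofReal_mul_cexp_I_mul _ _).symm)

lemma integral_norm_ofReal_mul_cexp_sq :
    ∫ ω, ‖(A ω : ℂ) * Complex.exp (Complex.I * Ψ ω)‖ ^ 2 ∂μ = ∫ ω, A ω ^ 2 ∂μ := by
  simp only [norm_ofReal_mul_cexp_I_mul, Real.norm_eq_abs, sq_abs]

lemma IndepFun.integral_ofReal_mul_cexp (h : A ⟂ᵢ[μ] Ψ) (hA : AEMeasurable A μ)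
    (hΨ : AEMeasurable Ψ μ) :
    ∫ ω, (A ω : ℂ) * Complex.exp (Complex.I * Ψ ω) ∂μ =
      (∫ ω, A ω ∂μ) * ∫ ω, Complex.exp (Complex.I * Ψ ω) ∂μ := by
  refine ((h.comp (φ := fun r : ℝ => (r : ℂ)) (ψ := fun θ : ℝ => Complex.exp (Complex.I * θ))
    (by fun_prop) (by fun_prop)).integral_fun_mul_eq_mul_integral ?_ ?_).trans ?_
  · exact (Complex.measurable_ofReal.comp_aemeasurable hA).aestronglyMeasurable
  · exact ((by fun_prop : Measurable fun θ : ℝ => Complex.exp (Complex.I * θ)).comp_aemeasurable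
      hΨ).aestronglyMeasurable
  · simp only [Function.comp_def, integral_complex_ofReal]

end Phasor

end ProbabilityTheory

theorem destination_side_SNR_rayleigh_general
    {Ωs : Type*} [MeasurableSpace Ωs] (μ : Measure Ωs) [IsProbabilityMeasure μ]
    (b N : ℕ) (hN : 0 < N)
    (P_R Ω_D N_0 : ℝ) (hΩD : 0 < Ω_D)
    (β Ψ : Fin N → Ωs → ℝ)
    (hβmeas : ∀ n, Measurable (β n)) (hΨmeas : ∀ n, Measurable (Ψ n))
    (hβpdf : ∀ n, Measure.map (β n) μ = volume.withDensity
      (fun x => ENNReal.ofReal (if 0 ≤ x then 2 * x / Ω_D * Real.exp (-x ^ 2 / Ω_D) else 0)))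
    (hΨunif : ∀ n, Measure.map (Ψ n) μ =
      ENNReal.ofReal ((2 : ℝ) ^ b / (2 * π)) •
        volume.restrict (Set.Ico (-(π / 2 ^ b)) (π / 2 ^ b)))
    -- all 2N random variables are mutually independent
    (hindep : iIndepFun (Sum.elim β Ψ) μ) :
    (P_R / N) *
        (∫ ω, ‖∑ n, (β n ω : ℂ) * Complex.exp (Complex.I * (Ψ n ω : ℂ))‖ ^ 2 ∂μ) /
        N_0 =
      P_R * Ω_D *
          (1 + ((N : ℝ) - 1) * (π / 4) * ((2 : ℝ) ^ b / π * Real.sin (π / 2 ^ b)) ^ 2) /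
        N_0 := by
  set a : ℝ := π / 2 ^ b
  have ha : 0 < a := by positivity
  have hΨunif' (n : Fin N) :
      μ.map (Ψ n) = ENNReal.ofReal (1 / (2 * a)) • volume.restrict (Set.Ico (-a) a) := by
    rw [hΨunif n, show (2 : ℝ) ^ b / (2 * π) = 1 / (2 * a) by simp only [a]; field_simp]
  have hmean (n : Fin N) : ∫ ω, (β n ω : ℂ) * Complex.exp (Complex.I * Ψ n ω) ∂μ =
      ((√(π * Ω_D) / 2 * (Real.sin a / a) : ℝ) : ℂ) := by
    have hβΨ : β n ⟂ᵢ[μ] Ψ n := hindep.indepFun Sum.inl_ne_inr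
    rw [hβΨ.integral_ofReal_mul_cexp (hβmeas n).aemeasurable (hΨmeas n).aemeasurable,
      integral_of_map_eq_rayleigh hΩD (hβmeas n).aemeasurable (hβpdf n),
      integral_cexp_I_mul_of_map_eq_uniform ha (hΨmeas n).aemeasurable (hΨunif' n)]
    push_cast; rfl
  have hsq (n : Fin N) : ∫ ω, ‖(β n ω : ℂ) * Complex.exp (Complex.I * Ψ n ω)‖ ^ 2 ∂μ = Ω_D := by
    rw [integral_norm_ofReal_mul_cexp_sq,
      integral_sq_of_map_eq_rayleigh hΩD (hβmeas n).aemeasurable (hβpdf n)]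
  rw [integral_norm_sum_sq_of_pairwise_indep (s := Finset.univ)
    (Z := fun n ω => (β n ω : ℂ) * Complex.exp (Complex.I * Ψ n ω))
    (fun n _ => memLp_two_ofReal_mul_cexp
      (memLp_two_of_map_eq_rayleigh hΩD (hβmeas n).aemeasurable (hβpdf n)) (hΨmeas n))
    (fun n _ m _ hnm => hindep.indepFun_comp_sum_elim hβmeas hΨmeas
      (φ := fun r θ : ℝ => (r : ℂ) * Complex.exp (Complex.I * θ)) (by fun_prop) hnm)]
  simp only [hmean, hsq, Finset.sum_const, Finset.card_univ, Fintype.card_fin, nsmul_eq_mul]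
  rw [← Complex.ofReal_natCast, ← Complex.ofReal_mul, Complex.norm_real, Complex.norm_real,
    Real.norm_eq_abs, Real.norm_eq_abs, sq_abs, sq_abs,
    show (2 : ℝ) ^ b / π = 1 / a by simp only [a]; field_simp]
  field_simp
  rw [sq_sqrt (by positivity)]
  ring

/-- Destination-side SNR under Rayleigh fading (Eq. (ez5) of Corollary 1): with
i.i.d. Rayleigh amplitudes `β_n` of mean-square `Ω_D` and i.i.d. quantization
errors `Ψ_n` uniform on `[-π/2^b, π/2^b)`, all `2N` variables mutually
independent, `(P_R/N)·E[|vᵀh_D|²]/N_0 = P_R·Ω_D·(1+(N−1)·(π/4)·Q)/N_0`,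
where `Q = ((2^b/π)·sin(π/2^b))²`. -/
theorem destination_side_SNR_rayleigh
    {Ωs : Type*} [MeasurableSpace Ωs] (μ : Measure Ωs) [IsProbabilityMeasure μ]
    (b N : ℕ) (hb : 0 < b) (hN : 0 < N)
    (P_R Ω_D N_0 : ℝ) (hPR : 0 < P_R) (hΩD : 0 < Ω_D) (hN0 : 0 < N_0)
    (β Ψ : Fin N → Ωs → ℝ)
    (hβmeas : ∀ n, Measurable (β n)) (hΨmeas : ∀ n, Measurable (Ψ n))
    (hβnn : ∀ n ω, 0 ≤ β n ω)
    (hβpdf : ∀ n, Measure.map (β n) μ = volume.withDensity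
      (fun x => ENNReal.ofReal (if 0 ≤ x then 2 * x / Ω_D * Real.exp (-x ^ 2 / Ω_D) else 0)))
    (hΨunif : ∀ n, Measure.map (Ψ n) μ =
      ENNReal.ofReal ((2 : ℝ) ^ b / (2 * π)) •
        volume.restrict (Set.Ico (-(π / 2 ^ b)) (π / 2 ^ b)))
    -- all 2N random variables are mutually independent
    (hindep : iIndepFun (Sum.elim β Ψ) μ) :
    (P_R / N) *
        (∫ ω, ‖∑ n, (β n ω : ℂ) * Complex.exp (Complex.I * (Ψ n ω : ℂ))‖ ^ 2 ∂μ) /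
        N_0 =
      P_R * Ω_D *
          (1 + ((N : ℝ) - 1) * (π / 4) * ((2 : ℝ) ^ b / π * Real.sin (π / 2 ^ b)) ^ 2) /
        N_0 :=
  destination_side_SNR_rayleigh_general μ b N hN P_R Ω_D N_0 hΩD β Ψ hβmeas hΨmeas hβpdf hΨunif
    hindep
end

section
/- Let P_R, P_S, P_T, M, N, a, η_0 be real numbers with N > 0 and P_S = P_T − P_R. If there exist real numbers λ_1, λ_2, λ_3 satisfying the four stationarity equations: N + 2λ_1·N·η_0·P_R + λ_1·M·N + λ_2 = 0; P_R + λ_1·P_R²·η_0 + M·P_R·λ_1 + λ_3 = 0; λ_1·N·P_R − 2λ_1·a·M·P_S + λ_3 = 0; and −λ_1·a·M² + λ_2 = 0; then η_0·N·P_R² + (a·M² + N² + 2a·M·N)·P_R − 2a·M·N·P_T = 0. -/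
/-- Stationarity of the Lagrangian (Eqs. (ee6)–(ee6.3) ⟹ Eq. (ee10)): if the four
stationarity equations admit multipliers `λ₁, λ₂, λ₃`, then
`η₀·N·P_R² + (a·M² + N² + 2a·M·N)·P_R − 2a·M·N·P_T = 0`. -/
theorem lagrangian_stationarity_implies_quadratic
    (P_R P_S P_T M N a η₀ : ℝ) (hN : 0 < N) (hPS : P_S = P_T - P_R)
    (lam₁ lam₂ lam₃ : ℝ)
    (h1 : N + 2 * lam₁ * N * η₀ * P_R + lam₁ * M * N + lam₂ = 0)
    (h2 : P_R + lam₁ * P_R ^ 2 * η₀ + M * P_R * lam₁ + lam₃ = 0)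
    (h3 : lam₁ * N * P_R - 2 * lam₁ * a * M * P_S + lam₃ = 0)
    (h4 : -lam₁ * a * M ^ 2 + lam₂ = 0) :
    η₀ * N * P_R ^ 2 + (a * M ^ 2 + N ^ 2 + 2 * a * M * N) * P_R - 2 * a * M * N * P_T = 0 := by
  have hl : lam₁ ≠ 0 := by
    intro h
    subst h
    have h2' : lam₂ = 0 := by linarith [h4]
    nlinarith [h1]
  have key : lam₁ * (η₀ * N * P_R ^ 2 + (a * M ^ 2 + N ^ 2 + 2 * a * M * N) * P_R
      - 2 * a * M * N * P_T) = 0 := by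
    subst hPS
    linear_combination P_R * h1 - N * h2 + N * h3 - P_R * h4
  exact (mul_eq_zero.mp key).resolve_left hl
end
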